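/- For every α ∈ (0,1) and every x ∈ [0,α], one has 0 ≤ x·∂ŝ/∂x(x,α) ≤ ŝ(x,α) ≤ H(α), where ∂ŝ/∂x denotes the partial derivative of ŝ(x,α) with respect to x. -/

import Mathlib

/-- `mu p t = ((t - t^p)/((p-1)(1-t)))^(1/p)`, the real positive `p`th root. -/
noncomputable def mu (p : ℕ) (t : ℝ) : ℝ :=
  ((t - t ^ p) / (((p : ℝ) - 1) * (1 - t))) ^ ((1 : ℝ) / p)

/-- `ŝ(x,α) = p x / ((p-1) μ(α) + μ(α)^(1-p) x^p)`. -/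
noncomputable def shat (p : ℕ) (x α : ℝ) : ℝ :=
  (p : ℝ) * x / (((p : ℝ) - 1) * mu p α + x ^ p / mu p α ^ (p - 1))

/-- `H(α) = ŝ(α,α) = p α / ((p-1) μ(α) + μ(α)^(1-p) α^p)`. -/
noncomputable def Hfun (p : ℕ) (α : ℝ) : ℝ := shat p α α

private lemma aux_hasDeriv (P A c : ℝ) (n : ℕ) (x : ℝ)
    (hden : A + x ^ n / c ≠ 0) :
    HasDerivAt (fun y : ℝ => P * y / (A + y ^ n / c))
      ((P * (A + x ^ n / c) - P * x * ((n : ℝ) * x ^ (n - 1) / c)) / (A + x ^ n / c) ^ 2) x := by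
  have h1 : HasDerivAt (fun y : ℝ => P * y) P x := by
    simpa using (hasDerivAt_id x).const_mul P
  have h2 : HasDerivAt (fun y : ℝ => A + y ^ n / c) ((n : ℝ) * x ^ (n - 1) / c) x :=
    ((hasDerivAt_pow n x).div_const c).const_add A
  exact h1.div h2 hden

private lemma key_ineq (r : ℕ) {α : ℝ} (hα0 : 0 < α) (hα1 : α < 1) :
    α ^ (r + 2) * (((r : ℝ) + 1) * (1 - α)) ≤ α - α ^ (r + 2) := by
  have hgeo : (∑ i ∈ Finset.range (r + 1), α ^ i) * (1 - α) = 1 - α ^ (r + 1) := by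
    have := geom_sum_mul α (r + 1)
    linarith [this]
  have hsum : ((r : ℝ) + 1) * α ^ (r + 1) ≤ ∑ i ∈ Finset.range (r + 1), α ^ i := by
    have h := Finset.card_nsmul_le_sum (Finset.range (r + 1))
      (fun i => α ^ i) (α ^ (r + 1))
      (fun i hi => pow_le_pow_of_le_one hα0.le hα1.le (Finset.mem_range.mp hi).le)
    simpa [nsmul_eq_mul, Nat.cast_add] using h
  have h1 : ((r : ℝ) + 1) * α ^ (r + 1) * (1 - α) ≤ 1 - α ^ (r + 1) := by
    calc ((r : ℝ) + 1) * α ^ (r + 1) * (1 - α)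
        ≤ (∑ i ∈ Finset.range (r + 1), α ^ i) * (1 - α) :=
          mul_le_mul_of_nonneg_right hsum (by linarith)
      _ = 1 - α ^ (r + 1) := hgeo
  have h2 := mul_le_mul_of_nonneg_left h1 hα0.le
  have h3 : α * (((r : ℝ) + 1) * α ^ (r + 1) * (1 - α)) = α ^ (r + 2) * (((r : ℝ) + 1) * (1 - α)) := by
    ring
  have h4 : α * (1 - α ^ (r + 1)) = α - α ^ (r + 2) := by ring
  linarith [h2, h3, h4]

private lemma mu_facts (r : ℕ) {α : ℝ} (hα0 : 0 < α) (hα1 : α < 1) :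
    0 < mu (r + 2) α ∧ α ^ (r + 2) ≤ mu (r + 2) α ^ (r + 2) := by
  set q : ℝ := (α - α ^ (r + 2)) / ((((r + 2 : ℕ) : ℝ) - 1) * (1 - α)) with hqdef
  have hcast : (((r + 2 : ℕ) : ℝ) - 1) = (r : ℝ) + 1 := by push_cast; ring
  have hden : 0 < (((r + 2 : ℕ) : ℝ) - 1) * (1 - α) := by
    rw [hcast]
    apply mul_pos (by positivity) (by linarith)
  have hnum : 0 < α - α ^ (r + 2) := by
    have h1 : α ^ (r + 1) < 1 := pow_lt_one₀ hα0.le hα1 (by omega)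
    have h2 : 0 < α * (1 - α ^ (r + 1)) := mul_pos hα0 (by linarith)
    have h3 : α * (1 - α ^ (r + 1)) = α - α ^ (r + 2) := by ring
    linarith [h2, h3]
  have hq : 0 < q := div_pos hnum hden
  have hmu : mu (r + 2) α = q ^ ((1 : ℝ) / ((r + 2 : ℕ) : ℝ)) := rfl
  have hmupos : 0 < mu (r + 2) α := by
    rw [hmu]; exact Real.rpow_pos_of_pos hq _
  have hmupow : mu (r + 2) α ^ (r + 2) = q := by
    rw [hmu, ← Real.rpow_natCast (q ^ ((1 : ℝ) / ((r + 2 : ℕ) : ℝ))) (r + 2),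
      ← Real.rpow_mul hq.le]
    rw [one_div, inv_mul_cancel₀ (by positivity : ((r + 2 : ℕ) : ℝ) ≠ 0), Real.rpow_one]
  refine ⟨hmupos, ?_⟩
  rw [hmupow, hqdef, le_div_iff₀ hden, hcast]
  exact key_ineq r hα0 hα1

/-- **Lemma 1.** For every `α ∈ (0,1)` and every `x ∈ [0,α]`,
`0 ≤ x ŝ'(x,α) ≤ ŝ(x,α) ≤ H(α)`, where `'` is differentiation in `x`. -/
theorem shat_deriv_bounds (p : ℕ) (hp : 2 ≤ p)
    (α : ℝ) (hα : α ∈ Set.Ioo (0 : ℝ) 1) :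
    ∀ x ∈ Set.Icc (0 : ℝ) α,
      0 ≤ x * deriv (fun y => shat p y α) x ∧
      x * deriv (fun y => shat p y α) x ≤ shat p x α ∧
      shat p x α ≤ Hfun p α := by
  obtain ⟨r, rfl⟩ : ∃ r, p = r + 2 := ⟨p - 2, by omega⟩
  obtain ⟨hα0, hα1⟩ := hα
  obtain ⟨hm, hmp⟩ := mu_facts r hα0 hα1
  intro x hx
  obtain ⟨hx0, hxα⟩ := hx
  set m : ℝ := mu (r + 2) α with hmdef
  set P : ℝ := ((r + 2 : ℕ) : ℝ) with hPdef
  have hP : P = (r : ℝ) + 2 := by rw [hPdef]; push_cast; ring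
  have hP0 : (0 : ℝ) < P := by rw [hP]; positivity
  set c : ℝ := m ^ (r + 1) with hcdef
  have hc : 0 < c := by positivity
  have hr21 : r + 2 - 1 = r + 1 := rfl
  -- denominators
  have hDx : 0 < (P - 1) * m + x ^ (r + 2) / c := by
    have h1 : 0 < (P - 1) * m := by
      apply mul_pos _ hm; rw [hP]; linarith [Nat.cast_nonneg (α := ℝ) r]
    have h2 : 0 ≤ x ^ (r + 2) / c := by positivity
    linarith
  have hDα : 0 < (P - 1) * m + α ^ (r + 2) / c := by
    have h1 : 0 < (P - 1) * m := by
      apply mul_pos _ hm; rw [hP]; linarith [Nat.cast_nonneg (α := ℝ) r]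
    have h2 : 0 ≤ α ^ (r + 2) / c := by positivity
    linarith
  -- the derivative
  have hder : HasDerivAt (fun y => shat (r + 2) y α)
      ((P * ((P - 1) * m + x ^ (r + 2) / c) - P * x * (P * x ^ (r + 1) / c)) /
        ((P - 1) * m + x ^ (r + 2) / c) ^ 2) x := by
    have := aux_hasDeriv P ((P - 1) * m) c (r + 2) x (by
      simpa using hDx.ne')
    simpa [shat, hr21, hmdef, hcdef, hPdef] using this
  have hderiv_eq : deriv (fun y => shat (r + 2) y α) x =
      (P * ((P - 1) * m + x ^ (r + 2) / c) - P * x * (P * x ^ (r + 1) / c)) /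
        ((P - 1) * m + x ^ (r + 2) / c) ^ 2 := hder.deriv
  -- basic bounds
  have hxp : x ^ (r + 2) ≤ m ^ (r + 2) :=
    le_trans (pow_le_pow_left₀ hx0 hxα _) hmp
  have hdm : x ^ (r + 2) / c ≤ m := by
    rw [div_le_iff₀ hc]
    calc x ^ (r + 2) ≤ m ^ (r + 2) := hxp
      _ = m * c := by rw [hcdef]; ring
  have hd0 : 0 ≤ x ^ (r + 2) / c := by positivity
  -- numerator identity
  have hnum_eq : P * ((P - 1) * m + x ^ (r + 2) / c) - P * x * (P * x ^ (r + 1) / c)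
      = P * (P - 1) * (m - x ^ (r + 2) / c) := by
    field_simp
    ring
  have hP1 : (1 : ℝ) ≤ P - 1 := by rw [hP]; linarith [Nat.cast_nonneg (α := ℝ) r]
  have hnum_nonneg : 0 ≤ P * ((P - 1) * m + x ^ (r + 2) / c) - P * x * (P * x ^ (r + 1) / c) := by
    rw [hnum_eq]
    have : 0 ≤ m - x ^ (r + 2) / c := by linarith
    positivity
  refine ⟨?_, ?_, ?_⟩
  · -- 0 ≤ x * deriv
    rw [hderiv_eq]
    exact mul_nonneg hx0 (div_nonneg hnum_nonneg (sq_nonneg _))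
  · -- x * deriv ≤ shat
    rw [hderiv_eq]
    simp only [shat, hr21]
    rw [show ((r + 2 : ℕ) : ℝ) = P from rfl]
    rw [show ((mu (r+2) α) : ℝ) = m from rfl]
    have hDx2 : (0:ℝ) < ((P - 1) * m + x ^ (r + 2) / c) ^ 2 := by positivity
    have hrhs : P * x / ((P - 1) * m + x ^ (r + 2) / c)
        = x * (P * ((P - 1) * m + x ^ (r + 2) / c)) / ((P - 1) * m + x ^ (r + 2) / c) ^ 2 := by
      field_simp
    rw [hrhs, mul_div_assoc' x _ _]
    have hkey : P * ((P - 1) * m + x ^ (r + 2) / c) - P * x * (P * x ^ (r + 1) / c)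
        ≤ P * ((P - 1) * m + x ^ (r + 2) / c) := by
      rw [hnum_eq]
      have he : P * ((P - 1) * m + x ^ (r + 2) / c) - P * (P - 1) * (m - x ^ (r + 2) / c)
          = P * P * (x ^ (r + 2) / c) := by ring
      linarith [he, mul_nonneg (mul_nonneg hP0.le hP0.le) hd0]
    exact (div_le_div_iff_of_pos_right hDx2).mpr (mul_le_mul_of_nonneg_left hkey hx0)
  · -- shat x ≤ Hfun = shat α
    simp only [shat, Hfun, hr21]
    rw [show ((r + 2 : ℕ) : ℝ) = P from rfl]
    rw [show ((mu (r+2) α) : ℝ) = m from rfl]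
    rw [div_le_div_iff₀ hDx hDα]
    -- reduce to x * Dα ≤ α * Dx
    have hmain : x * ((P - 1) * m + α ^ (r + 2) / c) ≤ α * ((P - 1) * m + x ^ (r + 2) / c) := by
      -- multiply by c: key : x*α^(r+2) - α*x^(r+2) ≤ (P-1)*m^(r+2)*(α-x)
      have hkey : x * α ^ (r + 2) - α * x ^ (r + 2) ≤ ((r : ℝ) + 1) * m ^ (r + 2) * (α - x) := by
        set S : ℝ := ∑ i ∈ Finset.range (r + 1), α ^ i * x ^ (r + 1 - 1 - i) with hSdef
        have hgeom : S * (α - x) = α ^ (r + 1) - x ^ (r + 1) := geom_sum₂_mul α x (r + 1)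
        have hS0 : 0 ≤ S := by
          apply Finset.sum_nonneg
          intro i _
          positivity
        have hSle : S ≤ ((r : ℝ) + 1) * α ^ r := by
          have h := Finset.sum_le_card_nsmul (Finset.range (r + 1))
            (fun i => α ^ i * x ^ (r + 1 - 1 - i)) (α ^ r) ?_
          · simpa [nsmul_eq_mul, Nat.cast_add, hSdef] using h
          · intro i hi
            have hi' : i < r + 1 := Finset.mem_range.mp hi
            calc α ^ i * x ^ (r + 1 - 1 - i) ≤ α ^ i * α ^ (r + 1 - 1 - i) :=
                mul_le_mul_of_nonneg_left (pow_le_pow_left₀ hx0 hxα _)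
                  (pow_nonneg hα0.le i)
              _ = α ^ r := by rw [← pow_add]; congr 1; omega
        have heq : x * α ^ (r + 2) - α * x ^ (r + 2) = α * x * (S * (α - x)) := by
          rw [hgeom]; ring
        rw [heq]
        calc α * x * (S * (α - x)) = (α * x * S) * (α - x) := by ring
          _ ≤ (α * α * (((r : ℝ) + 1) * α ^ r)) * (α - x) := by
              apply mul_le_mul_of_nonneg_right _ (by linarith)
              exact mul_le_mul (mul_le_mul_of_nonneg_left hxα hα0.le) hSle hS0 (by positivity)
          _ = (((r : ℝ) + 1) * α ^ (r + 2)) * (α - x) := by ring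
          _ ≤ (((r : ℝ) + 1) * m ^ (r + 2)) * (α - x) := by
              apply mul_le_mul_of_nonneg_right _ (by linarith)
              apply mul_le_mul_of_nonneg_left hmp (by positivity)
      have hmc : m * c = m ^ (r + 2) := by rw [hcdef]; ring
      have hid : α * ((P - 1) * m + x ^ (r + 2) / c) - x * ((P - 1) * m + α ^ (r + 2) / c)
          = ((P - 1) * (m * c) * (α - x) - (x * α ^ (r + 2) - α * x ^ (r + 2))) / c := by
        field_simp
        ring
      have hnum3 : 0 ≤ (P - 1) * (m * c) * (α - x) - (x * α ^ (r + 2) - α * x ^ (r + 2)) := by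
        rw [hP, hmc]
        linarith [hkey]
      linarith [hid, div_nonneg hnum3 hc.le]
    linarith [mul_le_mul_of_nonneg_left hmain hP0.le]
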